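/- Let 𝔥 be a Hoffman graph and let f₁, …, f_k be fat vertices of 𝔥. For positive integers n₁, …, n_k, let 𝔊^{n₁,…,n_k} be the Hoffman graph obtained from 𝔥 by replacing each fᵢ by a slim clique Kⁱ on nᵢ vertices and joining every neighbor of fᵢ to every vertex of Kⁱ. Then λ_min(𝔊^{n₁,…,n_k}) ≥ λ_min(𝔥), and λ_min(𝔊^{n₁,…,n_k}) converges to λ_min(𝔥) as n₁, …, n_k all tend to infinity. -/

import Mathlib

attribute [local instance] Classical.propDecidable

open scoped RealInnerProductSpace

/-- A Hoffman graph: a graph together with a labeling of its vertices as fat or slim,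
such that every fat vertex has a slim neighbor and fat vertices are pairwise nonadjacent. -/
structure HoffmanGraph (V : Type*) where
  graph : SimpleGraph V
  IsFat : V → Prop
  fat_not_adj : ∀ {x y : V}, IsFat x → IsFat y → ¬ graph.Adj x y
  fat_slim_nbr : ∀ {x : V}, IsFat x → ∃ y : V, ¬ IsFat y ∧ graph.Adj x y

namespace HoffmanGraph

variable {V : Type*}

/-- A vertex is slim if it is not fat. -/
def IsSlim (H : HoffmanGraph V) (x : V) : Prop := ¬ H.IsFat x

/-- The type of slim vertices. -/
abbrev Slim (H : HoffmanGraph V) := {v : V // H.IsSlim v}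

/-- The number of fat neighbors of a vertex. -/
noncomputable def fatDeg (H : HoffmanGraph V) (x : V) : ℕ :=
  {f : V | H.IsFat f ∧ H.graph.Adj x f}.ncard

/-- The number of common fat neighbors of two vertices. -/
noncomputable def commonFat (H : HoffmanGraph V) (x y : V) : ℕ :=
  {f : V | H.IsFat f ∧ H.graph.Adj x f ∧ H.graph.Adj y f}.ncard

lemma commonFat_comm (H : HoffmanGraph V) (x y : V) :
    H.commonFat x y = H.commonFat y x := by
  unfold commonFat
  congr 1
  ext f
  simp only [Set.mem_setOf_eq]
  tauto

/-- A Hoffman graph is fat if every slim vertex has a fat neighbor. -/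
def IsFatGraph (H : HoffmanGraph V) : Prop :=
  ∀ x, H.IsSlim x → ∃ f, H.IsFat f ∧ H.graph.Adj x f

/-- A representation of norm `m`. -/
def IsRep (H : HoffmanGraph V) (m : ℝ) {E : Type*} [NormedAddCommGroup E]
    [InnerProductSpace ℝ E] (φ : V → E) : Prop :=
  (∀ x, H.IsSlim x → ⟪φ x, φ x⟫ = m) ∧
  (∀ x, H.IsFat x → ⟪φ x, φ x⟫ = 1) ∧
  (∀ x y, H.graph.Adj x y → ⟪φ x, φ y⟫ = 1) ∧
  (∀ x y, x ≠ y → ¬ H.graph.Adj x y → ⟪φ x, φ y⟫ = 0)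

/-- A reduced representation of norm `m` (only the values on slim vertices matter). -/
def IsReducedRep (H : HoffmanGraph V) (m : ℝ) {E : Type*} [NormedAddCommGroup E]
    [InnerProductSpace ℝ E] (ψ : V → E) : Prop :=
  (∀ x, H.IsSlim x → ⟪ψ x, ψ x⟫ = m - H.fatDeg x) ∧
  (∀ x y, H.IsSlim x → H.IsSlim y → H.graph.Adj x y → ⟪ψ x, ψ y⟫ = 1 - H.commonFat x y) ∧
  (∀ x y, H.IsSlim x → H.IsSlim y → x ≠ y → ¬ H.graph.Adj x y →
    ⟪ψ x, ψ y⟫ = - (H.commonFat x y : ℝ))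

/-- The matrix B(𝔥) = A_s − C Cᵀ, indexed by the slim vertices. -/
noncomputable def matrixB (H : HoffmanGraph V) : Matrix H.Slim H.Slim ℝ :=
  fun x y => (if H.graph.Adj x.1 y.1 then (1 : ℝ) else 0) - (H.commonFat x.1 y.1 : ℝ)

/-- The smallest eigenvalue of a Hoffman graph. -/
noncomputable def lambdaMin (H : HoffmanGraph V) [Fintype V] : ℝ :=
  sInf (spectrum ℝ H.matrixB)

/-- A subset of the vertices induces a Hoffman graph iff every fat vertex of it retains
a slim neighbor inside it. -/
def IsGoodSubset (H : HoffmanGraph V) (S : Set V) : Prop :=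
  ∀ x ∈ S, H.IsFat x → ∃ y ∈ S, ¬ H.IsFat y ∧ H.graph.Adj x y

/-- The induced Hoffman subgraph on a good subset. -/
def induce (H : HoffmanGraph V) (S : Set V) (hS : H.IsGoodSubset S) : HoffmanGraph S where
  graph := H.graph.induce S
  IsFat := fun x => H.IsFat x.1
  fat_not_adj := by
    intro x y hx hy hadj
    exact H.fat_not_adj hx hy hadj
  fat_slim_nbr := by
    rintro ⟨x, hxS⟩ hx
    obtain ⟨y, hyS, hy, hadj⟩ := hS x hxS hx
    exact ⟨⟨y, hyS⟩, hy, hadj⟩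

/-- An (abstract) induced Hoffman subgraph relation between Hoffman graphs. -/
def IsInducedSubgraphOf {V₁ V₂ : Type*} (H₁ : HoffmanGraph V₁) (H₂ : HoffmanGraph V₂) : Prop :=
  ∃ e : V₁ ↪ V₂, (∀ x y, H₂.graph.Adj (e x) (e y) ↔ H₁.graph.Adj x y) ∧
    (∀ x, H₂.IsFat (e x) ↔ H₁.IsFat x)

/-- Isomorphism of Hoffman graphs. -/
def IsIsoTo {V₁ V₂ : Type*} (H₁ : HoffmanGraph V₁) (H₂ : HoffmanGraph V₂) : Prop :=
  ∃ e : V₁ ≃ V₂, (∀ x y, H₂.graph.Adj (e x) (e y) ↔ H₁.graph.Adj x y) ∧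
    (∀ x, H₂.IsFat (e x) ↔ H₁.IsFat x)

/-- `H` is the sum of its induced subgraphs on `W₁` and `W₂`. -/
structure IsSum (H : HoffmanGraph V) (W₁ W₂ : Set V) : Prop where
  nonempty₁ : W₁.Nonempty
  nonempty₂ : W₂.Nonempty
  good₁ : H.IsGoodSubset W₁
  good₂ : H.IsGoodSubset W₂
  union_eq : W₁ ∪ W₂ = Set.univ
  slim_partition : ∀ v, H.IsSlim v → (v ∈ W₁ ↔ v ∉ W₂)
  fat_closed₁ : ∀ x ∈ W₁, H.IsSlim x → ∀ f, H.IsFat f → H.graph.Adj x f → f ∈ W₁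
  fat_closed₂ : ∀ x ∈ W₂, H.IsSlim x → ∀ f, H.IsFat f → H.graph.Adj x f → f ∈ W₂
  common_le : ∀ x ∈ W₁, ∀ y ∈ W₂, H.IsSlim x → H.IsSlim y → H.commonFat x y ≤ 1
  common_iff : ∀ x ∈ W₁, ∀ y ∈ W₂, H.IsSlim x → H.IsSlim y →
    (H.commonFat x y = 1 ↔ H.graph.Adj x y)

/-- `H` is decomposable if it is the sum of two nonempty induced Hoffman subgraphs. -/
def Decomposable (H : HoffmanGraph V) : Prop := ∃ W₁ W₂ : Set V, H.IsSum W₁ W₂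

def Indecomposable (H : HoffmanGraph V) : Prop := ¬ H.Decomposable

/-- `H` is the sum of the family of its induced subgraphs on `W i`. -/
structure IsSumFamily (H : HoffmanGraph V) {n : ℕ} (W : Fin n → Set V) : Prop where
  nonempty : ∀ i, (W i).Nonempty
  good : ∀ i, H.IsGoodSubset (W i)
  union_eq : ⋃ i, W i = Set.univ
  slim_mem_unique : ∀ v, H.IsSlim v → ∃! i, v ∈ W i
  fat_closed : ∀ i, ∀ x ∈ W i, H.IsSlim x → ∀ f, H.IsFat f → H.graph.Adj x f → f ∈ W i
  common_le : ∀ i j, i ≠ j → ∀ x ∈ W i, ∀ y ∈ W j, H.IsSlim x → H.IsSlim y →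
    H.commonFat x y ≤ 1
  common_iff : ∀ i j, i ≠ j → ∀ x ∈ W i, ∀ y ∈ W j, H.IsSlim x → H.IsSlim y →
    (H.commonFat x y = 1 ↔ H.graph.Adj x y)

/-- Attach a new fat vertex (the `none` vertex) adjacent exactly to the slim vertices in `S`. -/
def attachFat (H : HoffmanGraph V) (S : Set V) (hne : S.Nonempty)
    (hslim : ∀ v ∈ S, H.IsSlim v) : HoffmanGraph (Option V) where
  graph := {
    Adj := fun a b =>
      match a, b with
      | none, none => False
      | none, some v => v ∈ S
      | some v, none => v ∈ S
      | some u, some v => H.graph.Adj u v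
    symm := by
      refine ⟨?_⟩
      rintro (_|u) (_|v) h
      · exact h.elim
      · exact h
      · exact h
      · exact h.symm
    loopless := by
      refine ⟨?_⟩
      rintro (_|u) h
      · exact h.elim
      · exact H.graph.loopless.irrefl u h }
  IsFat := fun a => match a with | none => True | some v => H.IsFat v
  fat_not_adj := by
    rintro (_|u) (_|v) hu hv h
    · exact h.elim
    · exact (hslim v h) hv
    · exact (hslim u h) hu
    · exact H.fat_not_adj hu hv h
  fat_slim_nbr := by
    rintro (_|u) hu
    · obtain ⟨s, hs⟩ := hne
      exact ⟨some s, hslim s hs, hs⟩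
    · obtain ⟨y, hy, hadj⟩ := H.fat_slim_nbr hu
      exact ⟨some y, hy, hadj⟩

/-- `H` is `μ`-saturated: it has smallest eigenvalue at least `μ` and no fat vertex can be
attached while keeping the smallest eigenvalue at least `μ`. -/
def IsSaturated (H : HoffmanGraph V) [Fintype V] (μ : ℝ) : Prop :=
  μ ≤ H.lambdaMin ∧
  ∀ (S : Set V) (hne : S.Nonempty) (hslim : ∀ v ∈ S, H.IsSlim v),
    ¬ (μ ≤ (H.attachFat S hne hslim).lambdaMin)

/-- The special graph `S⁻(𝔥)`: slim vertices, adjacent when the inner product of their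
reduced representations is negative. -/
noncomputable def specialMinus (H : HoffmanGraph V) : SimpleGraph H.Slim where
  Adj x y := x ≠ y ∧
    ((H.graph.Adj x.1 y.1 ∧ (1 : ℝ) - (H.commonFat x.1 y.1 : ℝ) < 0) ∨
     (¬ H.graph.Adj x.1 y.1 ∧ -(H.commonFat x.1 y.1 : ℝ) < 0))
  symm := by
    refine ⟨?_⟩
    rintro x y ⟨hne, h⟩
    refine ⟨hne.symm, ?_⟩
    rw [H.commonFat_comm y.1 x.1]
    rcases h with ⟨ha, hl⟩ | ⟨ha, hl⟩
    · exact Or.inl ⟨ha.symm, hl⟩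
    · exact Or.inr ⟨fun hadj => ha hadj.symm, hl⟩
  loopless := ⟨fun x h => h.1 rfl⟩

/-- The special graph `S⁺(𝔥)`: slim vertices, adjacent when the inner product of their
reduced representations is positive. -/
noncomputable def specialPlus (H : HoffmanGraph V) : SimpleGraph H.Slim where
  Adj x y := x ≠ y ∧
    ((H.graph.Adj x.1 y.1 ∧ 0 < (1 : ℝ) - (H.commonFat x.1 y.1 : ℝ)) ∨
     (¬ H.graph.Adj x.1 y.1 ∧ 0 < -(H.commonFat x.1 y.1 : ℝ)))
  symm := by
    refine ⟨?_⟩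
    rintro x y ⟨hne, h⟩
    refine ⟨hne.symm, ?_⟩
    rw [H.commonFat_comm y.1 x.1]
    rcases h with ⟨ha, hl⟩ | ⟨ha, hl⟩
    · exact Or.inl ⟨ha.symm, hl⟩
    · exact Or.inr ⟨fun hadj => ha hadj.symm, hl⟩
  loopless := ⟨fun x h => h.1 rfl⟩

/-- The special graph `S(𝔥)`, the union of `S⁻(𝔥)` and `S⁺(𝔥)`. -/
noncomputable def special (H : HoffmanGraph V) : SimpleGraph H.Slim :=
  H.specialMinus ⊔ H.specialPlus

/-- `⟨S⟩_𝔥`: the set `S` together with all fat neighbors of its members. -/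
def closureSet (H : HoffmanGraph V) (S : Set V) : Set V :=
  S ∪ {f | H.IsFat f ∧ ∃ x ∈ S, H.graph.Adj x f}

/-- The Hoffman graph `𝔥^(t)` with one slim vertex (`none`) and `t` fat vertices. -/
def manyFat (t : ℕ) : HoffmanGraph (Option (Fin t)) where
  graph := {
    Adj := fun a b => (a = none ∧ b ≠ none) ∨ (a ≠ none ∧ b = none)
    symm := by
      refine ⟨?_⟩
      rintro a b (⟨h1, h2⟩ | ⟨h1, h2⟩)
      · exact Or.inr ⟨h2, h1⟩
      · exact Or.inl ⟨h2, h1⟩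
    loopless := by
      refine ⟨?_⟩
      rintro a (⟨h1, h2⟩ | ⟨h1, h2⟩)
      · exact h2 h1
      · exact h1 h2 }
  IsFat := fun a => a ≠ none
  fat_not_adj := by
    rintro a b ha hb (⟨h1, _⟩ | ⟨_, h1⟩)
    · exact ha h1
    · exact hb h1
  fat_slim_nbr := by
    intro a ha
    refine ⟨none, by simp, Or.inr ⟨ha, rfl⟩⟩

/-- An ordinary (slim) graph regarded as a Hoffman graph. -/
def ofSimple {W : Type*} (G : SimpleGraph W) : HoffmanGraph W where
  graph := G
  IsFat := fun _ => False
  fat_not_adj := by intro x y hx _ _; exact hx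
  fat_slim_nbr := by intro x hx; exact hx.elim

end HoffmanGraph
namespace HoffmanGraph

variable {V : Type*}

/-- The Hoffman graph obtained by replacing the fat vertices `f i` by slim cliques of
sizes `n i`, joining all neighbors of `f i` to all vertices of the `i`-th clique. -/
def blowup {k : ℕ} (H : HoffmanGraph V) (f : Fin k → V) (hf : ∀ i, H.IsFat (f i))
    (n : Fin k → ℕ) :
    HoffmanGraph ({v : V // v ∉ Set.range f} ⊕ (Σ i : Fin k, Fin (n i))) where
  graph := {
    Adj := fun a b =>
      match a, b with
      | .inl u, .inl v => H.graph.Adj u.1 v.1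
      | .inl u, .inr x => H.graph.Adj u.1 (f x.1)
      | .inr x, .inl v => H.graph.Adj (f x.1) v.1
      | .inr x, .inr y => x ≠ y ∧ x.1 = y.1
    symm := by
      refine ⟨?_⟩
      rintro (u|x) (v|y) h
      · exact h.symm
      · exact h.symm
      · exact h.symm
      · exact ⟨h.1.symm, h.2.symm⟩
    loopless := by
      refine ⟨?_⟩
      rintro (u|x) h
      · exact H.graph.loopless.irrefl _ h
      · exact h.1 rfl }
  IsFat := fun a => match a with | .inl u => H.IsFat u.1 | .inr _ => False
  fat_not_adj := by
    rintro (u|x) (v|y) hu hv h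
    · exact H.fat_not_adj hu hv h
    · exact hv
    · exact hu
    · exact hu
  fat_slim_nbr := by
    rintro (u|x) hu
    · obtain ⟨y, hy, hadj⟩ := H.fat_slim_nbr hu
      refine ⟨Sum.inl ⟨y, ?_⟩, hy, hadj⟩
      rintro ⟨i, rfl⟩
      exact hy (hf i)
    · exact hu.elim

/-- The slim graph obtained by replacing every fat vertex by a slim `n`-clique,
joining all neighbors of a fat vertex to all vertices of its clique. -/
def blowupAll (H : HoffmanGraph V) (n : ℕ) :
    HoffmanGraph (H.Slim ⊕ ({f : V // H.IsFat f} × Fin n)) where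
  graph := {
    Adj := fun a b =>
      match a, b with
      | .inl u, .inl v => H.graph.Adj u.1 v.1
      | .inl u, .inr x => H.graph.Adj u.1 x.1.1
      | .inr x, .inl v => H.graph.Adj x.1.1 v.1
      | .inr x, .inr y => x ≠ y ∧ x.1 = y.1
    symm := by
      refine ⟨?_⟩
      rintro (u|x) (v|y) h
      · exact h.symm
      · exact h.symm
      · exact h.symm
      · exact ⟨h.1.symm, h.2.symm⟩
    loopless := by
      refine ⟨?_⟩
      rintro (u|x) h
      · exact H.graph.loopless.irrefl _ h
      · exact h.1 rfl }
  IsFat := fun _ => False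
  fat_not_adj := by intro x y hx _; exact hx.elim
  fat_slim_nbr := by intro x hx; exact hx.elim

/-- The Hoffman graph of Example 4.2: slim vertices `ℤ/4ℤ` (the `inl`'s), fat vertices
`f_j` for `j ∈ ℤ/4ℤ` (the `inr`'s), with edges `{0,2}`, `{1,3}` and `{i, f_j}` for
`i = j` or `i = j + 1`. -/
def exampleA3tilde : HoffmanGraph (ZMod 4 ⊕ ZMod 4) where
  graph := {
    Adj := fun a b =>
      match a, b with
      | .inl i, .inl j => j = i + 2
      | .inl i, .inr j => i = j ∨ i = j + 1
      | .inr j, .inl i => i = j ∨ i = j + 1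
      | .inr _, .inr _ => False
    symm := by
      have h4 : (2 : ZMod 4) + 2 = 0 := by decide
      refine ⟨?_⟩
      rintro (i|i) (j|j) h
      · have h' : j = i + 2 := h
        subst h'
        show i = i + 2 + 2
        rw [add_assoc, h4, add_zero]
      · exact h
      · exact h
      · exact h.elim
    loopless := by
      refine ⟨?_⟩
      rintro (i|i) h
      · exact absurd (left_eq_add.mp h) (by decide)
      · exact h }
  IsFat := fun a => match a with | .inl _ => False | .inr _ => True
  fat_not_adj := by
    rintro (i|i) (j|j) hx hy h
    · exact hx
    · exact hx
    · exact hy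
    · exact h
  fat_slim_nbr := by
    rintro (i|i) hx
    · exact hx.elim
    · exact ⟨Sum.inl i, id, Or.inl rfl⟩

end HoffmanGraph

/-- The extended Dynkin graph `D̃₄`, i.e. the star `K_{1,4}`. -/
def tildeD4Graph : SimpleGraph (Fin 5) := SimpleGraph.fromRel (fun a _ => a = 0)

/-- The Dynkin graph `A_m`: the path on `m` vertices. -/
def dynkinA (m : ℕ) : SimpleGraph (Fin m) :=
  SimpleGraph.fromRel (fun i j => i.1 + 1 = j.1)

/-- The extended Dynkin graph `Ã_m`: the cycle on `m + 1` vertices. -/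
def tildeA (m : ℕ) : SimpleGraph (ZMod (m + 1)) :=
  SimpleGraph.fromRel (fun i j => i + 1 = j)

/-- The Dynkin graph `D_m`: the path `1 - 2 - ⋯ - (m-1)` with the extra vertex `0`
attached to the vertex `2`. -/
def dynkinD (m : ℕ) : SimpleGraph (Fin m) :=
  SimpleGraph.fromRel (fun i j => (1 ≤ i.1 ∧ i.1 + 1 = j.1) ∨ (i.1 = 0 ∧ j.1 = 2))

/-- The extended Dynkin graph `D̃_m` on `m + 1` vertices: the path `1 - 2 - ⋯ - (m-1)`
with the extra vertex `0` attached to `2` and the extra vertex `m` attached to `m - 2`. -/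
def tildeD (m : ℕ) : SimpleGraph (Fin (m + 1)) :=
  SimpleGraph.fromRel (fun i j =>
    (1 ≤ i.1 ∧ i.1 + 1 = j.1 ∧ j.1 ≤ m - 1) ∨ (i.1 = 0 ∧ j.1 = 2) ∨ (i.1 = m ∧ j.1 = m - 2))

/-!
Index the slim vertices of `𝔊 = 𝔊^{n₁,…,n_k}` by the slim vertices of `𝔥` together with the
cliques `Kⁱ`. A pair of slim vertices of `𝔥` loses in `𝔊` exactly its common fat neighbours
among the `fᵢ`, so `B(𝔊) = (B(𝔥) ⊕ -I) + W Wᵀ`, where `W p i = 1` iff `p` is a neighbour of `fᵢ`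
or lies in `Kⁱ`. Hence `(x, y)ᵀ B(𝔊) (x, y) = xᵀ B(𝔥) x - ‖y‖² + ‖Wᵀ (x, y)‖²`.

Since every `fᵢ` has a slim neighbour, `λ_min(𝔥) ≤ -1`, so `-‖y‖² ≥ λ_min(𝔥) ‖y‖²` and the form
is at least `λ_min(𝔥) ‖(x, y)‖²`. Conversely, for a unit minimiser `x` of `𝔥`, taking `y`
constant equal to `-cᵢ / nᵢ` on `Kⁱ`, where `cᵢ` is the sum of `x` over the neighbours of `fᵢ`,
kills `Wᵀ (x, y)`; its Rayleigh quotient `(λ_min(𝔥) - δ) / (1 + δ)` with `δ = ∑ cᵢ² / nᵢ`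
tends to `λ_min(𝔥)`.
-/

namespace Matrix

variable {ι : Type*} [Fintype ι] [DecidableEq ι] {A : Matrix ι ι ℝ}

theorem IsHermitian.sInf_spectrum_mul_dotProduct_le (hA : A.IsHermitian) (x : ι → ℝ) :
    sInf (spectrum ℝ A) * (x ⬝ᵥ x) ≤ x ⬝ᵥ A *ᵥ x := by
  set t := sInf (spectrum ℝ A)
  have hpsd : (A - algebraMap ℝ _ t).PosSemidef := by
    refine posSemidef_iff_isHermitian_and_spectrum_nonneg.mpr
      ⟨hA.sub (isHermitian_diagonal _), ?_⟩
    rw [← spectrum.sub_singleton_eq]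
    rintro _ ⟨a, ha, _, rfl, rfl⟩
    exact sub_nonneg.mpr (csInf_le A.finite_real_spectrum.bddBelow ha)
  have := hpsd.dotProduct_mulVec_nonneg x
  simp only [star_trivial, sub_mulVec, dotProduct_sub, Algebra.algebraMap_eq_smul_one,
    smul_mulVec, one_mulVec, dotProduct_smul, smul_eq_mul] at this
  linarith

theorem IsHermitian.sInf_spectrum_le_apply_self (hA : A.IsHermitian) (i : ι) :
    sInf (spectrum ℝ A) ≤ A i i := by
  simpa using hA.sInf_spectrum_mul_dotProduct_le (Pi.single i 1)

theorem IsHermitian.exists_dotProduct_mulVec_eq_sInf_spectrum [Nonempty ι] (hA : A.IsHermitian) :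
    ∃ x : ι → ℝ, x ⬝ᵥ x = 1 ∧ x ⬝ᵥ A *ᵥ x = sInf (spectrum ℝ A) := by
  obtain ⟨i, hi⟩ : sInf (spectrum ℝ A) ∈ Set.range hA.eigenvalues := by
    rw [← hA.spectrum_real_eq_range_eigenvalues]
    refine Set.Nonempty.csInf_mem ?_ A.finite_real_spectrum
    rw [hA.spectrum_real_eq_range_eigenvalues]
    exact Set.range_nonempty _
  set v := hA.eigenvectorBasis i
  have hv : (v : ι → ℝ) ⬝ᵥ v = 1 := by
    have h : ⟪v, v⟫ = 1 := by
      rw [real_inner_self_eq_norm_sq, hA.eigenvectorBasis.orthonormal.1 i, one_pow]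
    rw [EuclideanSpace.inner_eq_star_dotProduct] at h
    simpa [dotProduct, mul_comm] using h
  refine ⟨v, hv, ?_⟩
  rw [hA.mulVec_eigenvectorBasis, dotProduct_smul, hv, ← hi]
  simp

theorem le_sInf_spectrum_of_forall_mul_dotProduct_le {c : ℝ} (hc : c ≤ 0)
    (h : ∀ x, c * (x ⬝ᵥ x) ≤ x ⬝ᵥ A *ᵥ x) : c ≤ sInf (spectrum ℝ A) := by
  rcases (spectrum ℝ A).eq_empty_or_nonempty with hσ | hσ
  · rwa [hσ, Real.sInf_empty]
  have hmem := hσ.csInf_mem A.finite_real_spectrum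
  rw [← spectrum_toLin', ← Module.End.hasEigenvalue_iff_mem_spectrum] at hmem
  obtain ⟨x, hx⟩ := hmem.exists_hasEigenvector
  have hAx : A *ᵥ x = sInf (spectrum ℝ A) • x := by simpa using hx.apply_eq_smul
  have hpos : 0 < x ⬝ᵥ x :=
    (dotProduct_self_star_nonneg x).lt_of_ne' (dotProduct_self_eq_zero.not.mpr hx.2)
  have := h x
  rw [hAx, dotProduct_smul, smul_eq_mul] at this
  exact le_of_mul_le_mul_right this hpos

theorem spectrum_submatrix_equiv {κ : Type*} [Fintype κ] [DecidableEq κ] (e : κ ≃ ι) :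
    spectrum ℝ (A.submatrix e e) = spectrum ℝ A :=
  AlgEquiv.spectrum_eq (reindexAlgEquiv ℝ ℝ e.symm) A

end Matrix

theorem tendsto_sum_div_atTop_nhds_zero {ι : Type*} [Fintype ι] (c : ι → ℝ) :
    Filter.Tendsto (fun n : ι → ℕ => ∑ i, c i / n i) Filter.atTop (nhds 0) := by
  simpa using tendsto_finsetSum (Finset.univ : Finset ι) fun i _ =>
    tendsto_const_nhds.div_atTop ((tendsto_natCast_atTop_atTop (R := ℝ)).comp
      (Filter.tendsto_atTop_atTop.mpr fun b => ⟨fun _ => b, fun n hn => hn i⟩))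

namespace HoffmanGraph

open Matrix

variable {V : Type*} (H : HoffmanGraph V)

theorem matrixB_isHermitian : H.matrixB.IsHermitian := by
  ext s t
  simp [matrixB, SimpleGraph.adj_comm, commonFat_comm]

theorem matrixB_apply_self (s : H.Slim) : H.matrixB s s = -H.commonFat s s := by
  simp [matrixB]

theorem commonFat_eq_sum [Fintype V] (x y : V) :
    (H.commonFat x y : ℝ) =
      ∑ g, if H.IsFat g ∧ H.graph.Adj x g ∧ H.graph.Adj y g then 1 else 0 := by
  rw [commonFat, Set.ncard_eq_toFinset_card', Set.toFinset_ofPred, Finset.natCast_card_filter]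

theorem lambdaMin_le_neg_one [Fintype V] {g : V} (hg : H.IsFat g) : H.lambdaMin ≤ -1 := by
  obtain ⟨s, hs, hsg⟩ := H.fat_slim_nbr hg
  have hpos : 0 < H.commonFat s s := by
    rw [commonFat, Set.ncard_pos]
    exact ⟨g, hg, hsg.symm, hsg.symm⟩
  calc H.lambdaMin ≤ H.matrixB ⟨s, hs⟩ ⟨s, hs⟩ :=
        H.matrixB_isHermitian.sInf_spectrum_le_apply_self _
    _ ≤ -1 := by
        rw [matrixB_apply_self, neg_le_neg_iff]
        exact_mod_cast hpos

theorem lambdaMin_eq_zero_of_isEmpty [Fintype V] [IsEmpty H.Slim] : H.lambdaMin = 0 := by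
  rw [lambdaMin, spectrum.of_subsingleton, Real.sInf_empty]

theorem lambdaMin_nonpos [Fintype V] : H.lambdaMin ≤ 0 := by
  rcases isEmpty_or_nonempty H.Slim with hS | ⟨⟨s⟩⟩
  · exact H.lambdaMin_eq_zero_of_isEmpty.le
  calc H.lambdaMin ≤ H.matrixB s s := H.matrixB_isHermitian.sInf_spectrum_le_apply_self s
    _ ≤ 0 := by simp [matrixB_apply_self]

section Blowup

variable {k : ℕ} (f : Fin k → V) (hf : ∀ i, H.IsFat (f i)) (n : Fin k → ℕ)

def blowupSlimEquiv : H.Slim ⊕ (Σ i, Fin (n i)) ≃ (H.blowup f hf n).Slim where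
  toFun := Sum.elim
    (fun s => ⟨.inl ⟨s.1, by rintro ⟨i, hi⟩; exact s.2 (hi ▸ hf i)⟩, s.2⟩)
    (fun q => ⟨.inr q, id⟩)
  invFun
    | ⟨.inl u, hu⟩ => .inl ⟨u.1, hu⟩
    | ⟨.inr q, _⟩ => .inr q
  left_inv := by rintro (s | q) <;> rfl
  right_inv := by rintro ⟨u | q, h⟩ <;> rfl

theorem commonFat_blowup_inr (p : {v // v ∉ Set.range f} ⊕ Σ i, Fin (n i)) (q : Σ i, Fin (n i)) :
    (H.blowup f hf n).commonFat p (.inr q) = 0 := by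
  rw [commonFat]
  convert Set.ncard_empty ({v // v ∉ Set.range f} ⊕ Σ i, Fin (n i)) using 2
  ext (u | r)
  · simp only [Set.mem_ofPred_eq, Set.mem_empty_iff_false, iff_false]
    exact fun ⟨hu, _, hqu⟩ => H.fat_not_adj (hf q.1) hu hqu
  · simp only [Set.mem_ofPred_eq, Set.mem_empty_iff_false, iff_false]
    exact fun ⟨hr, _⟩ => hr

theorem commonFat_blowup_inl [Fintype V] (hinj : Function.Injective f)
    (u w : {v // v ∉ Set.range f}) :
    ((H.blowup f hf n).commonFat (.inl u) (.inl w) : ℝ) = H.commonFat u w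
      - ∑ i, if H.graph.Adj u (f i) ∧ H.graph.Adj w (f i) then 1 else 0 := by
  have hH : (H.commonFat u w : ℝ) =
      (∑ i, if H.graph.Adj u (f i) ∧ H.graph.Adj w (f i) then 1 else 0)
        + ∑ v : {v // v ∉ Set.range f},
            if H.IsFat v ∧ H.graph.Adj u v ∧ H.graph.Adj w v then 1 else 0 := by
    rw [commonFat_eq_sum, ← Fintype.sum_subtype_add_sum_subtype (· ∈ Set.range f)]
    congr 1
    exact Finset.sum_equiv (Equiv.ofInjective f hinj).symm (by simp) fun i _ => by
      obtain ⟨_, j, rfl⟩ := i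
      simp [hf]
  have hG : ((H.blowup f hf n).commonFat (.inl u) (.inl w) : ℝ) =
      ∑ v : {v // v ∉ Set.range f},
        if H.IsFat v ∧ H.graph.Adj u v ∧ H.graph.Adj w v then 1 else 0 := by
    have hslim : ∀ q, ¬ (H.blowup f hf n).IsFat (.inr q) := fun _ h => h
    simp only [commonFat_eq_sum, Fintype.sum_sum_type, hslim, false_and, if_false,
      Finset.sum_const_zero, add_zero]
    rfl
  linarith

noncomputable def fatAdjacency : Matrix H.Slim (Fin k) ℝ :=
  of fun s i => if H.graph.Adj s (f i) then 1 else 0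

noncomputable def blowupIncidence : Matrix (H.Slim ⊕ Σ i, Fin (n i)) (Fin k) ℝ :=
  fromRows (H.fatAdjacency f) (of fun q i => if q.1 = i then 1 else 0)

noncomputable def blowupMatrix : Matrix (H.Slim ⊕ Σ i, Fin (n i)) (H.Slim ⊕ Σ i, Fin (n i)) ℝ :=
  fromBlocks H.matrixB 0 0 (-1) + H.blowupIncidence f n * (H.blowupIncidence f n)ᵀ

@[simp] theorem blowup_adj_inl_inl (u w : {v // v ∉ Set.range f}) :
    (H.blowup f hf n).graph.Adj (.inl u) (.inl w) ↔ H.graph.Adj u w := Iff.rfl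

@[simp] theorem blowup_adj_inl_inr (u : {v // v ∉ Set.range f}) (q : Σ i, Fin (n i)) :
    (H.blowup f hf n).graph.Adj (.inl u) (.inr q) ↔ H.graph.Adj u (f q.1) := Iff.rfl

@[simp] theorem blowup_adj_inr_inl (q : Σ i, Fin (n i)) (u : {v // v ∉ Set.range f}) :
    (H.blowup f hf n).graph.Adj (.inr q) (.inl u) ↔ H.graph.Adj (f q.1) u := Iff.rfl

@[simp] theorem blowup_adj_inr_inr (q r : Σ i, Fin (n i)) :
    (H.blowup f hf n).graph.Adj (.inr q) (.inr r) ↔ q ≠ r ∧ q.1 = r.1 := Iff.rfl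

theorem submatrix_matrixB_blowup [Fintype V] (hinj : Function.Injective f) :
    (H.blowup f hf n).matrixB.submatrix (H.blowupSlimEquiv f hf n) (H.blowupSlimEquiv f hf n) =
      H.blowupMatrix f n := by
  ext (s | q) (t | r) <;>
    simp only [blowupSlimEquiv, matrixB, blowupMatrix, blowupIncidence, fatAdjacency,
      submatrix_apply, Equiv.coe_fn_mk, Sum.elim_inl, Sum.elim_inr, Matrix.add_apply,
      fromBlocks_apply₁₁, fromBlocks_apply₁₂, fromBlocks_apply₂₁, fromBlocks_apply₂₂, mul_apply,
      transpose_apply, fromRows_apply_inl, fromRows_apply_inr, of_apply, blowup_adj_inl_inl,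
      blowup_adj_inl_inr, blowup_adj_inr_inl, blowup_adj_inr_inr, commonFat_blowup_inr,
      Matrix.neg_apply, one_apply]
  · rw [commonFat_blowup_inl H f hf n hinj]
    simp only [ite_zero_mul_ite_zero, mul_one]
    ring
  · simp [mul_ite]
  · rw [commonFat_comm, commonFat_blowup_inr]
    simp only [ite_mul, one_mul, zero_mul, Finset.sum_ite_eq, Finset.mem_univ, if_true,
      zero_add, Nat.cast_zero, sub_zero, Matrix.zero_apply, H.graph.adj_comm]
  · by_cases hqr : q = r
    · simp [hqr]
    · simp [hqr]

theorem lambdaMin_blowup [Fintype V] (hinj : Function.Injective f) :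
    (H.blowup f hf n).lambdaMin = sInf (spectrum ℝ (H.blowupMatrix f n)) := by
  rw [← H.submatrix_matrixB_blowup f hf n hinj, lambdaMin]
  -- `convert` reconciles the `DecidableEq` instances used by `lambdaMin` and by the lemma.
  convert congrArg sInf (spectrum_submatrix_equiv _).symm

theorem blowupMatrix_isHermitian [Fintype V] : (H.blowupMatrix f n).IsHermitian := by
  refine (H.matrixB_isHermitian.fromBlocks (by simp) (by simp)).add ?_
  simpa using isHermitian_mul_conjTranspose_self (H.blowupIncidence f n)

theorem sumElim_dotProduct_blowupMatrix_mulVec [Fintype V] (x : H.Slim → ℝ)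
    (y : (Σ i, Fin (n i)) → ℝ) :
    Sum.elim x y ⬝ᵥ H.blowupMatrix f n *ᵥ Sum.elim x y = x ⬝ᵥ H.matrixB *ᵥ x - y ⬝ᵥ y
      + (Sum.elim x y ᵥ* H.blowupIncidence f n) ⬝ᵥ (Sum.elim x y ᵥ* H.blowupIncidence f n) := by
  rw [blowupMatrix, add_mulVec, dotProduct_add, fromBlocks_mulVec, sumElim_dotProduct_sumElim,
    ← mulVec_mulVec, dotProduct_mulVec, mulVec_transpose]
  simp [sub_eq_add_neg, neg_mulVec]

theorem lambdaMin_le_lambdaMin_blowup [Fintype V] (hinj : Function.Injective f) :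
    H.lambdaMin ≤ (H.blowup f hf n).lambdaMin := by
  rw [H.lambdaMin_blowup f hf n hinj]
  refine le_sInf_spectrum_of_forall_mul_dotProduct_le H.lambdaMin_nonpos fun w => ?_
  obtain ⟨x, y, rfl⟩ : ∃ x y, w = Sum.elim x y :=
    ⟨w ∘ .inl, w ∘ .inr, (Sum.elim_comp_inl_inr w).symm⟩
  have hx : H.lambdaMin * (x ⬝ᵥ x) ≤ x ⬝ᵥ H.matrixB *ᵥ x :=
    H.matrixB_isHermitian.sInf_spectrum_mul_dotProduct_le x
  have hy : H.lambdaMin * (y ⬝ᵥ y) ≤ -(y ⬝ᵥ y) := by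
    simp only [dotProduct, Finset.mul_sum, ← Finset.sum_neg_distrib]
    exact Finset.sum_le_sum fun q _ => by
      nlinarith [H.lambdaMin_le_neg_one (hf q.1), mul_self_nonneg (y q)]
  have hW := dotProduct_self_star_nonneg (Sum.elim x y ᵥ* H.blowupIncidence f n)
  rw [sumElim_dotProduct_blowupMatrix_mulVec, sumElim_dotProduct_sumElim]
  simp only [star_trivial] at hW
  linarith

theorem lambdaMin_blowup_mul_le [Fintype V] (hinj : Function.Injective f) (hn : ∀ i, 0 < n i)
    (x : H.Slim → ℝ) :
    (H.blowup f hf n).lambdaMin * (x ⬝ᵥ x + ∑ i, (x ᵥ* H.fatAdjacency f) i ^ 2 / n i) ≤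
      x ⬝ᵥ H.matrixB *ᵥ x - ∑ i, (x ᵥ* H.fatAdjacency f) i ^ 2 / n i := by
  set c := x ᵥ* H.fatAdjacency f
  set y : (Σ i, Fin (n i)) → ℝ := fun q => -c q.1 / n q.1
  have hn' : ∀ i, (n i : ℝ) ≠ 0 := fun i => by exact_mod_cast (hn i).ne'
  have hyK : (y ᵥ* of fun q i => if q.1 = i then 1 else 0) = -c := by
    ext i
    simp only [vecMul, dotProduct, of_apply, mul_ite, mul_one, mul_zero, Fintype.sum_sigma,
      Finset.sum_ite_irrel, Finset.sum_const, Finset.card_univ, Fintype.card_fin, nsmul_eq_mul,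
      Finset.sum_ite_eq', Finset.mem_univ, if_true, Pi.neg_apply, y]
    field_simp [hn' i]
  have hyy : y ⬝ᵥ y = ∑ i, c i ^ 2 / n i := by
    simp only [dotProduct, Fintype.sum_sigma, y]
    refine Finset.sum_congr rfl fun i _ => ?_
    simp only [Finset.sum_const, Finset.card_univ, Fintype.card_fin, nsmul_eq_mul]
    field_simp [hn' i]
  have hW : Sum.elim x y ᵥ* H.blowupIncidence f n = 0 := by
    rw [blowupIncidence, sumElim_vecMul_fromRows, hyK, add_neg_cancel]
  have hray := (H.blowupMatrix_isHermitian f n).sInf_spectrum_mul_dotProduct_le (Sum.elim x y)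
  rw [← H.lambdaMin_blowup f hf n hinj, sumElim_dotProduct_blowupMatrix_mulVec, hW,
    sumElim_dotProduct_sumElim, hyy, dotProduct_zero, add_zero] at hray
  exact hray

end Blowup

end HoffmanGraph

open Filter Topology Matrix

/-- Theorem 2.14 (Hoffman's limit theorem): replacing the fat vertices `f i` by slim
`n i`-cliques joined to all neighbors of `f i` never decreases the smallest eigenvalue,
and the smallest eigenvalue tends to `λ_min(𝔥)` as all `n i → ∞`. -/
theorem hoffman_limit_theorem {V : Type} [Fintype V] (H : HoffmanGraph V) {k : ℕ}
    (f : Fin k → V) (hinj : Function.Injective f) (hf : ∀ i, H.IsFat (f i)) :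
    (∀ n : Fin k → ℕ, (∀ i, 0 < n i) → H.lambdaMin ≤ (H.blowup f hf n).lambdaMin) ∧
    Filter.Tendsto (fun n : Fin k → ℕ => (H.blowup f hf n).lambdaMin)
      Filter.atTop (nhds H.lambdaMin) := by
  have lower n := H.lambdaMin_le_lambdaMin_blowup f hf n hinj
  refine ⟨fun n _ => lower n, ?_⟩
  rcases isEmpty_or_nonempty H.Slim with hS | hS
  · refine tendsto_of_tendsto_of_tendsto_of_le_of_le tendsto_const_nhds tendsto_const_nhds lower
      fun n => ?_
    exact (HoffmanGraph.lambdaMin_nonpos _).trans_eq H.lambdaMin_eq_zero_of_isEmpty.symm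
  obtain ⟨x, hx, hxB⟩ := H.matrixB_isHermitian.exists_dotProduct_mulVec_eq_sInf_spectrum
  set δ := fun n : Fin k → ℕ => ∑ i, (x ᵥ* H.fatAdjacency f) i ^ 2 / n i
  have upper : ∀ᶠ n in atTop, (H.blowup f hf n).lambdaMin ≤ (H.lambdaMin - δ n) / (1 + δ n) := by
    filter_upwards [eventually_ge_atTop 1] with n hn
    have hδ : 0 ≤ δ n := Finset.sum_nonneg fun i _ => by positivity
    have h := H.lambdaMin_blowup_mul_le f hf n hinj (fun i => hn i) x
    rw [hx, hxB] at h
    rwa [le_div_iff₀ (by positivity)]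
  have hlim : Tendsto (fun n => (H.lambdaMin - δ n) / (1 + δ n)) atTop (𝓝 H.lambdaMin) := by
    have hδ : Tendsto δ atTop (𝓝 0) := tendsto_sum_div_atTop_nhds_zero _
    have h := ((tendsto_const_nhds (x := H.lambdaMin)).sub hδ).div
      ((tendsto_const_nhds (x := (1 : ℝ))).add hδ) (by norm_num)
    rwa [sub_zero, add_zero, div_one] at h
  exact tendsto_of_tendsto_of_tendsto_of_le_of_le' tendsto_const_nhds hlim (.of_forall lower) upper
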